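/- arXiv:2212.10967 — 4 statements merged into one kernel-verified Lean document; each statement's English description precedes it below -/
import Mathlib

section
/- For any convex body C in ℝⁿ (compact convex with nonempty interior), the function δ(X) := R(X,C), the circumradius of X with respect to C, defined on nonempty finite subsets X of ℝⁿ (with δ(∅)=0), is a diversity on ℝⁿ. -/
open Pointwise

def IsDiversity {X : Type*} [DecidableEq X] (δ : Finset X → ℝ) : Prop :=
  (∀ A, 0 ≤ δ A) ∧ (∀ A, δ A = 0 ↔ A.card ≤ 1) ∧
  ∀ A B C : Finset X, B.Nonempty → δ (A ∪ C) ≤ δ (A ∪ B) + δ (B ∪ C)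

/-- `circumradius X C` is the smallest `r ≥ 0` such that some translate of `X`
is contained in `r • C`. -/
noncomputable def circumradius {n : ℕ} (X C : Set (Fin n → ℝ)) : ℝ :=
  sInf {r : ℝ | 0 ≤ r ∧ ∃ x : Fin n → ℝ, x +ᵥ X ⊆ r • C}

/-! A translate of `X` inside `r • C` gives `dist a b ≤ r * diam C` for `a, b ∈ X`, so when `C`
is bounded only subsingletons have circumradius zero. For the triangle inequality, if
`x +ᵥ X ⊆ r • C`, `y +ᵥ Y ⊆ s • C` and `b ∈ X ∩ Y`, then `x + y + b + u` is `(x + u) + (y + b)`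
or `(x + b) + (y + u)`, so `(x + y + b) +ᵥ (X ∪ Y) ⊆ r • C + s • C = (r + s) • C`, the equality
by convexity of `C`. Apply this to `A ∪ B` and `B ∪ C'`, which share `B`. -/

open Topology

section NormedSpace

variable {E : Type*} [NormedAddCommGroup E] [NormedSpace ℝ E] {X Y C : Set E}

/-- For `c ∈ interior C`, the neighbourhood `-c +ᵥ C` of the origin absorbs `X`. -/
theorem exists_vadd_subset_smul (hX : Bornology.IsBounded X) (hint : (interior C).Nonempty) :
    ∃ r : ℝ, 0 ≤ r ∧ ∃ x : E, x +ᵥ X ⊆ r • C := by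
  obtain ⟨c, hc⟩ := hint
  have hnhds : -c +ᵥ C ∈ 𝓝 (0 : E) := by
    rw [show (0 : E) = -c +ᵥ c by simp, vadd_mem_nhds_vadd_iff]
    exact mem_interior_iff_mem_nhds.mp hc
  obtain ⟨r, hr, habs⟩ :=
    ((NormedSpace.isVonNBounded_iff ℝ).mpr hX hnhds).exists_pos
  refine ⟨r, hr.le, r • c, ?_⟩
  rintro _ ⟨p, hp, rfl⟩
  obtain ⟨_, ⟨q, hq, rfl⟩, rfl⟩ := habs r (by rw [Real.norm_of_nonneg hr.le]) hp
  refine ⟨q, hq, ?_⟩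
  simp only [vadd_eq_add, smul_add, smul_neg, add_neg_cancel_left]

theorem dist_le_mul_diam_of_vadd_subset_smul (hC : Bornology.IsBounded C) {r : ℝ} (hr : 0 ≤ r)
    {x : E} (h : x +ᵥ X ⊆ r • C) {a b : E} (ha : a ∈ X) (hb : b ∈ X) :
    dist a b ≤ r * Metric.diam C := by
  obtain ⟨p, hp, hpa⟩ := h (Set.vadd_mem_vadd_set ha)
  obtain ⟨q, hq, hqb⟩ := h (Set.vadd_mem_vadd_set hb)
  calc dist a b = dist (x +ᵥ a) (x +ᵥ b) := (dist_vadd_cancel_left x a b).symm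
    _ = r * dist p q := by rw [← hpa, ← hqb, dist_smul₀, Real.norm_of_nonneg hr]
    _ ≤ r * Metric.diam C := by gcongr; exact Metric.dist_le_diam_of_mem hC hp hq

theorem vadd_union_subset_add_smul (hconv : Convex ℝ C) {r s : ℝ} (hr : 0 ≤ r) (hs : 0 ≤ s)
    {x y b : E} (hx : x +ᵥ X ⊆ r • C) (hy : y +ᵥ Y ⊆ s • C) (hbX : b ∈ X) (hbY : b ∈ Y) :
    (x + y + b) +ᵥ (X ∪ Y) ⊆ (r + s) • C := by
  rw [hconv.add_smul hr hs]
  rintro _ ⟨u, hu | hu, rfl⟩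
  · convert Set.add_mem_add (hx (Set.vadd_mem_vadd_set hu)) (hy (Set.vadd_mem_vadd_set hbY))
      using 1
    simp only [vadd_eq_add]; abel
  · convert Set.add_mem_add (hx (Set.vadd_mem_vadd_set hbX)) (hy (Set.vadd_mem_vadd_set hu))
      using 1
    simp only [vadd_eq_add]; abel

end NormedSpace

namespace circumradius

variable {n : ℕ} {X Y C : Set (Fin n → ℝ)}

theorem nonneg : 0 ≤ circumradius X C :=
  Real.sInf_nonneg fun _ hr => hr.1

theorem le_of_vadd_subset_smul {r : ℝ} (hr : 0 ≤ r) {x : Fin n → ℝ} (h : x +ᵥ X ⊆ r • C) :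
    circumradius X C ≤ r :=
  csInf_le ⟨0, fun _ hs => hs.1⟩ ⟨hr, x, h⟩

theorem eq_zero_of_subsingleton (hX : X.Subsingleton) (hC : C.Nonempty) :
    circumradius X C = 0 := by
  refine le_antisymm ?_ nonneg
  obtain rfl | ⟨a, rfl⟩ := hX.eq_empty_or_singleton
  · exact le_of_vadd_subset_smul le_rfl (x := 0) (by simp)
  · refine le_of_vadd_subset_smul le_rfl (x := -a) ?_
    simp [Set.zero_smul_set hC]

theorem dist_le_mul_diam (hX : Bornology.IsBounded X) (hC : Bornology.IsBounded C)
    (hint : (interior C).Nonempty) {a b : Fin n → ℝ} (ha : a ∈ X) (hb : b ∈ X) :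
    dist a b ≤ circumradius X C * Metric.diam C := by
  rw [mul_comm, ← smul_eq_mul, circumradius, ← Real.sInf_smul_of_nonneg Metric.diam_nonneg]
  refine le_csInf (let ⟨r, hr⟩ := exists_vadd_subset_smul hX hint; ⟨_, r, hr, rfl⟩) ?_
  rintro _ ⟨r, ⟨hr, x, hx⟩, rfl⟩
  exact (dist_le_mul_diam_of_vadd_subset_smul hC hr hx ha hb).trans_eq (mul_comm _ _)

theorem subsingleton_of_eq_zero (hX : Bornology.IsBounded X) (hC : Bornology.IsBounded C)
    (hint : (interior C).Nonempty) (h : circumradius X C = 0) : X.Subsingleton := fun _ ha _ hb =>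
  dist_le_zero.mp <| by simpa [h] using dist_le_mul_diam hX hC hint ha hb

theorem mono (hXY : X ⊆ Y) (hY : Bornology.IsBounded Y) (hint : (interior C).Nonempty) :
    circumradius X C ≤ circumradius Y C :=
  le_csInf (exists_vadd_subset_smul hY hint) fun _ ⟨hr, _, hx⟩ =>
    le_of_vadd_subset_smul hr ((Set.vadd_set_mono hXY).trans hx)

theorem union_le (hconv : Convex ℝ C) (hint : (interior C).Nonempty)
    (hX : Bornology.IsBounded X) (hY : Bornology.IsBounded Y) (hXY : (X ∩ Y).Nonempty) :
    circumradius (X ∪ Y) C ≤ circumradius X C + circumradius Y C := by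
  obtain ⟨b, hbX, hbY⟩ := hXY
  rw [← sub_le_iff_le_add']
  refine le_csInf (exists_vadd_subset_smul hY hint) fun s ⟨hs, y, hy⟩ => ?_
  rw [sub_le_comm]
  refine le_csInf (exists_vadd_subset_smul hX hint) fun r ⟨hr, x, hx⟩ => ?_
  rw [sub_le_iff_le_add]
  exact le_of_vadd_subset_smul (add_nonneg hr hs)
    (vadd_union_subset_add_smul hconv hr hs hx hy hbX hbY)

end circumradius

/-- For a convex body `C`, the circumradius functional `δ(X) := R(X,C)` on finite
subsets of `ℝⁿ` is a diversity. -/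
theorem circumradius_isDiversity {n : ℕ} (C : Set (Fin n → ℝ))
    (hC : IsCompact C) (hconv : Convex ℝ C) (hint : (interior C).Nonempty) :
    IsDiversity (fun A : Finset (Fin n → ℝ) => circumradius (A : Set (Fin n → ℝ)) C) := by
  have hbdd (A : Finset (Fin n → ℝ)) : Bornology.IsBounded (A : Set (Fin n → ℝ)) :=
    A.finite_toSet.isBounded
  refine ⟨fun _ => circumradius.nonneg, fun A => ?_, fun A B C' hB => ?_⟩
  · rw [Finset.card_le_one]
    exact ⟨fun h a ha b hb =>
        circumradius.subsingleton_of_eq_zero (hbdd A) hC.isBounded hint h ha hb,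
      fun h => circumradius.eq_zero_of_subsingleton (fun a ha b hb => h a ha b hb)
        (hint.mono interior_subset)⟩
  · obtain ⟨b, hb⟩ := hB
    calc circumradius ↑(A ∪ C') C
        ≤ circumradius (↑(A ∪ B) ∪ ↑(B ∪ C')) C :=
          circumradius.mono (by push_cast; grind) ((hbdd _).union (hbdd _)) hint
      _ ≤ _ := circumradius.union_le hconv hint (hbdd _) (hbdd _) ⟨b, by simp [hb]⟩
end

section
/- Let C ⊂ ℝⁿ be a convex body with R(−C, C) = 1 (i.e., some translate of −C is contained in C, and 1 is the smallest such scaling). Then C is centrally symmetric, i.e., x − C = C for some x ∈ ℝⁿ. -/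
/-!
Since `R(-C, C) = 1`, and the infimum defining the circumradius is attained by compactness,
some translate `x - C` lies in `C`. Both sets have the same volume, so `C \ (x - C)` is a null
set; as `x - C` is closed, it must then contain the interior of `C`, hence its closure `C`.
-/

open Pointwise

open Set Filter Topology MeasureTheory

section NormedSpace

variable {E : Type*} [NormedAddCommGroup E] [NormedSpace ℝ E]

lemma norm_le_of_vadd_subset_smul {X C : Set E} {x a : E} {r M : ℝ} (hr : 0 ≤ r)
    (hCM : C ⊆ Metric.closedBall 0 M) (ha : a ∈ X) (h : x +ᵥ X ⊆ r • C) :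
    ‖x‖ ≤ r * M + ‖a‖ := by
  obtain ⟨c, hc, hxa⟩ := h (vadd_mem_vadd_set ha)
  have hcM : ‖c‖ ≤ M := by simpa using hCM hc
  calc ‖x‖ = ‖r • c - a‖ := by rw [eq_sub_of_add_eq hxa.symm]
    _ ≤ ‖r • c‖ + ‖a‖ := norm_sub_le _ _
    _ ≤ r * M + ‖a‖ := by
      rw [norm_smul, Real.norm_of_nonneg hr]
      gcongr

lemma vadd_subset_smul_of_tendsto {ι : Type*} {l : Filter ι} [l.NeBot] {X C : Set E}
    (hC : IsClosed C) {x : ι → E} {s : ι → ℝ} {x₀ : E} {r : ℝ} (hr : r ≠ 0)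
    (hx : Tendsto x l (𝓝 x₀)) (hs : Tendsto s l (𝓝 r)) (h : ∀ i, x i +ᵥ X ⊆ s i • C) :
    x₀ +ᵥ X ⊆ r • C := by
  rintro _ ⟨a, ha, rfl⟩
  rw [mem_smul_set_iff_inv_smul_mem₀ hr]
  refine hC.mem_of_tendsto ((hs.inv₀ hr).smul (hx.add_const a)) ?_
  filter_upwards [hs.eventually_ne hr] with i hi
  exact (mem_smul_set_iff_inv_smul_mem₀ hi _ _).1 (h i (vadd_mem_vadd_set ha))

variable [MeasurableSpace E]

lemma Convex.subset_of_measure_diff_eq_zero (μ : Measure E) [μ.IsOpenPosMeasure] {C D : Set E}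
    (hconv : Convex ℝ C) (hC : IsClosed C) (hint : (interior C).Nonempty) (hD : IsClosed D)
    (hμ : μ (C \ D) = 0) : C ⊆ D := by
  have hnull : μ (interior C \ D) = 0 :=
    measure_mono_null (sdiff_subset_sdiff_left interior_subset) hμ
  have hinterior : interior C ⊆ D :=
    sdiff_eq_empty.1 ((isOpen_interior.sdiff hD).measure_eq_zero_iff μ |>.1 hnull)
  rw [← hC.closure_eq, ← hconv.closure_interior_eq_closure_of_nonempty_interior hint]
  exact hD.closure_subset_iff.2 hinterior

end NormedSpace

lemma exists_vadd_subset_circumradius_smul {n : ℕ} {X C : Set (Fin n → ℝ)} (hC : IsCompact C)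
    (hX : X.Nonempty) (hR : 0 < circumradius X C) :
    ∃ x : Fin n → ℝ, x +ᵥ X ⊆ circumradius X C • C := by
  set S := {r : ℝ | 0 ≤ r ∧ ∃ x : Fin n → ℝ, x +ᵥ X ⊆ r • C}
  have hS : S.Nonempty := by
    by_contra hS
    exact hR.ne' ((congrArg sInf (not_nonempty_iff_eq_empty.1 hS)).trans Real.sInf_empty)
  obtain ⟨s, hs_anti, hs, hsS⟩ := exists_seq_tendsto_sInf hS ⟨0, fun r hr => hr.1⟩
  choose x hx using fun k => (hsS k).2
  obtain ⟨a, ha⟩ := hX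
  obtain ⟨M, hM0, hM⟩ := hC.isBounded.subset_closedBall_lt 0 0
  have hx_bdd : ∀ k, x k ∈ Metric.closedBall 0 (s 0 * M + ‖a‖) := fun k => by
    rw [mem_closedBall_zero_iff]
    calc ‖x k‖ ≤ s k * M + ‖a‖ := norm_le_of_vadd_subset_smul (hsS k).1 hM ha (hx k)
      _ ≤ s 0 * M + ‖a‖ := by gcongr; exact hs_anti (Nat.zero_le k)
  obtain ⟨x₀, -, φ, hφ, hxφ⟩ := (isCompact_closedBall _ _).tendsto_subseq hx_bdd
  exact ⟨x₀, vadd_subset_smul_of_tendsto hC.isClosed hR.ne' hxφ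
    (hs.comp hφ.tendsto_atTop) fun k => hx (φ k)⟩

/-- A convex body `C` with `R(-C, C) = 1` is centrally symmetric:
`x - C = C` for some `x`. -/
theorem symmetric_of_circumradius_neg_eq_one {n : ℕ} (C : Set (Fin n → ℝ))
    (hC : IsCompact C) (hconv : Convex ℝ C) (hint : (interior C).Nonempty)
    (hR : circumradius (-C) C = 1) :
    ∃ x : Fin n → ℝ, x +ᵥ (-C) = C := by
  obtain ⟨x, hx⟩ := exists_vadd_subset_circumradius_smul hC
    (hint.mono interior_subset).neg (hR ▸ one_pos)
  rw [hR, one_smul] at hx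
  have hclosed : IsClosed (x +ᵥ -C) := (hC.neg.vadd x).isClosed
  have hvol : volume (x +ᵥ -C) = volume C := by rw [measure_vadd, Measure.measure_neg]
  refine ⟨x, hx.antisymm (hconv.subset_of_measure_diff_eq_zero volume hC.isClosed hint hclosed ?_)⟩
  rw [measure_sdiff hx hclosed.measurableSet.nullMeasurableSet (hvol ▸ hC.measure_lt_top.ne),
    hvol, tsub_self]
end

section
/- Let p₁ = (−√3/2, −1/2), p₂ = (√3/2, −1/2), p₃ = (0,1). Given positive reals R₁₂, R₁₃, R₂₃ with R₁₃ ≤ R₁₂ and R₁₂ − R₁₃ ≤ R₂₃ ≤ R₁₂ + R₁₃, there exists a 0-symmetric convex body C ⊂ ℝ² such that R({p_i,p_j},C) = R_{ij} for all 1 ≤ i < j ≤ 3. -/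
/-!
Put `v₁₂ = (2R₁₂)⁻¹ • (p₂ - p₁)`, `v₁₃ = (2R₁₃)⁻¹ • (p₃ - p₁)`, `v₂₃ = (2R₂₃)⁻¹ • (p₃ - p₂)`
and let `C` be the convex hull of `±v₁₂, ±v₁₃, ±v₂₃`. Translating `{pᵢ, pⱼ}` so that its
midpoint is the origin puts it into `Rᵢⱼ • C`, so `R({pᵢ, pⱼ}, C) ≤ Rᵢⱼ`. Conversely, a linear
functional `f` with `|f| ≤ 1` on `C` separates the two points of any translate of `{pᵢ, pⱼ}`
in `r • C` by at most `2r`, so `f pⱼ - f pᵢ = 2Rᵢⱼ` forces `r ≥ Rᵢⱼ`. In the plane, `f` is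
determined by `f (p₂ - p₁) = 2α` and `f (p₃ - p₁) = 2γ`, and `|f| ≤ 1` on `C` amounts to
`|α| ≤ R₁₂`, `|γ| ≤ R₁₃`, `|γ - α| ≤ R₂₃`. The choice `(α, γ) = (R₁₂, R₁₃)` serves the pairs
`{p₁, p₂}` and `{p₁, p₃}`, and `(α, γ) = (R₁₃ - R₂₃, R₁₃)` the pair `{p₂, p₃}`; the hypotheses
are exactly what makes both choices admissible.
-/

open Pointwise

section SymmetricHull

variable {E : Type*} [AddCommGroup E] [Module ℝ E]

theorem neg_convexHull_union_neg (S : Set E) :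
    -convexHull ℝ (S ∪ -S) = convexHull ℝ (S ∪ -S) := by
  rw [← convexHull_neg, Set.union_neg, neg_neg, Set.union_comm]

theorem abs_le_one_of_mem_convexHull_union_neg {S : Set E} {f : E →ₗ[ℝ] ℝ}
    (hf : ∀ s ∈ S, |f s| ≤ 1) {z : E} (hz : z ∈ convexHull ℝ (S ∪ -S)) : |f z| ≤ 1 := by
  have hS : S ∪ -S ⊆ f ⁻¹' Set.Icc (-1) 1 := by
    rintro s (hs | hs)
    · exact abs_le.mp (hf s hs)
    · simpa [abs_le, and_comm] using hf _ hs
  exact abs_le.mpr (convexHull_min hS ((convex_Icc _ _).linear_preimage f) hz)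

theorem interior_convexHull_union_neg_nonempty {V : Type*} [NormedAddCommGroup V]
    [NormedSpace ℝ V] [FiniteDimensional ℝ V] [Nontrivial V] {S : Set V}
    (hS : Submodule.span ℝ S = ⊤) : (interior (convexHull ℝ (S ∪ -S))).Nonempty := by
  rw [interior_convexHull_nonempty_iff_affineSpan_eq_top,
    AffineSubspace.affineSpan_eq_top_iff_vectorSpan_eq_top_of_nontrivial, eq_top_iff, ← hS,
    Submodule.span_le]
  intro s hs
  have h := vsub_mem_vectorSpan ℝ (Set.mem_union_left (-S) hs)
    (Set.mem_union_right S (Set.neg_mem_neg.mpr hs))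
  have hs' : s = (2⁻¹ : ℝ) • (s -ᵥ -s) := by rw [vsub_eq_sub]; module
  rw [SetLike.mem_coe, hs']
  exact Submodule.smul_mem _ _ h

theorem abs_apply_le_of_mem_smul {C : Set E} {f : E →ₗ[ℝ] ℝ} (hf : ∀ z ∈ C, |f z| ≤ 1)
    {r : ℝ} (hr : 0 ≤ r) {y : E} (hy : y ∈ r • C) : |f y| ≤ r := by
  obtain ⟨z, hz, rfl⟩ := hy
  rw [map_smul, smul_eq_mul, abs_mul, abs_of_nonneg hr]
  exact mul_le_of_le_one_right hr (hf z hz)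

theorem abs_apply_inv_smul_sub_le_one {f : E →ₗ[ℝ] ℝ} {p q : E} {R : ℝ} (hR : 0 < R)
    (h : |f q - f p| ≤ 2 * R) : |f ((2 * R)⁻¹ • (q - p))| ≤ 1 := by
  rw [map_smul, map_sub, smul_eq_mul, abs_mul, abs_inv, abs_of_pos (by positivity : 0 < 2 * R)]
  exact inv_mul_le_one_of_le₀ h (by positivity)

theorem vadd_pair_subset_smul {C : Set E} {p q : E} {R : ℝ} (hR : R ≠ 0)
    (hv : (2 * R)⁻¹ • (q - p) ∈ C) (hnv : -((2 * R)⁻¹ • (q - p)) ∈ C) :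
    -((2 : ℝ)⁻¹ • (p + q)) +ᵥ ({p, q} : Set E) ⊆ R • C := by
  have hR' : R • (2 * R)⁻¹ • (q - p) = (2 : ℝ)⁻¹ • (q - p) := by
    rw [smul_smul]; congr 1; field_simp
  rw [Set.vadd_set_insert, Set.vadd_set_singleton, Set.insert_subset_iff,
    Set.singleton_subset_iff]
  constructor
  · convert Set.smul_mem_smul_set (a := R) hnv using 1
    rw [smul_neg, hR', vadd_eq_add]; module
  · convert Set.smul_mem_smul_set (a := R) hv using 1
    rw [hR', vadd_eq_add]; module

end SymmetricHull

section Circumradius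

variable {n : ℕ} {C : Set (Fin n → ℝ)}

theorem circumradius_le {X : Set (Fin n → ℝ)} {r : ℝ} (hr : 0 ≤ r) {x : Fin n → ℝ}
    (hx : x +ᵥ X ⊆ r • C) : circumradius X C ≤ r :=
  csInf_le ⟨0, fun _ h => h.1⟩ ⟨hr, x, hx⟩

theorem circumradius_pair_eq {p q : Fin n → ℝ} {R : ℝ} (hR : 0 < R)
    (hv : (2 * R)⁻¹ • (q - p) ∈ C) (hnv : -((2 * R)⁻¹ • (q - p)) ∈ C)
    (f : (Fin n → ℝ) →ₗ[ℝ] ℝ) (hfpq : f q - f p = 2 * R) (hf : ∀ z ∈ C, |f z| ≤ 1) :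
    circumradius {p, q} C = R := by
  have hfit := vadd_pair_subset_smul hR.ne' hv hnv
  refine (circumradius_le hR.le hfit).antisymm (le_csInf ⟨R, hR.le, _, hfit⟩ ?_)
  rintro r ⟨hr, x, hx⟩
  have hp := abs_apply_le_of_mem_smul hf hr (hx (Set.vadd_mem_vadd_set (Set.mem_insert p {q})))
  have hq := abs_apply_le_of_mem_smul hf hr
    (hx (Set.vadd_mem_vadd_set (Set.mem_insert_of_mem p rfl)))
  rw [vadd_eq_add, map_add] at hp hq
  linarith [abs_le.mp hp, abs_le.mp hq]

theorem circumradius_pair_convexHull_union_neg {S : Set (Fin n → ℝ)} {p q : Fin n → ℝ}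
    {R : ℝ} (hR : 0 < R) (hS : (2 * R)⁻¹ • (q - p) ∈ S) (f : (Fin n → ℝ) →ₗ[ℝ] ℝ)
    (hfpq : f q - f p = 2 * R) (hf : ∀ s ∈ S, |f s| ≤ 1) :
    circumradius {p, q} (convexHull ℝ (S ∪ -S)) = R :=
  circumradius_pair_eq hR (subset_convexHull ℝ _ (Or.inl hS))
    (subset_convexHull ℝ _ (Or.inr (Set.neg_mem_neg.mpr hS))) f hfpq
    fun _ => abs_le_one_of_mem_convexHull_union_neg hf

end Circumradius

section EquilateralTriangle

local notation "p₁" => (![-(Real.sqrt 3) / 2, -(1 / 2)] : Fin 2 → ℝ)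
local notation "p₂" => (![Real.sqrt 3 / 2, -(1 / 2)] : Fin 2 → ℝ)
local notation "p₃" => (![0, 1] : Fin 2 → ℝ)

def triangleVertices (R₁₂ R₁₃ R₂₃ : ℝ) : Set (Fin 2 → ℝ) :=
  {(2 * R₁₂)⁻¹ • (p₂ - p₁), (2 * R₁₃)⁻¹ • (p₃ - p₁), (2 * R₂₃)⁻¹ • (p₃ - p₂)}

theorem finite_triangleVertices (R₁₂ R₁₃ R₂₃ : ℝ) : (triangleVertices R₁₂ R₁₃ R₂₃).Finite :=
  ((Set.finite_singleton _).insert _).insert _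

theorem span_triangleVertices_eq_top {R₁₂ R₁₃ : ℝ} (h₁₂ : R₁₂ ≠ 0) (h₁₃ : R₁₃ ≠ 0) (R₂₃ : ℝ) :
    Submodule.span ℝ (triangleVertices R₁₂ R₁₃ R₂₃) = ⊤ := by
  have hind : LinearIndependent ℝ ![(2 * R₁₂)⁻¹ • (p₂ - p₁), (2 * R₁₃)⁻¹ • (p₃ - p₁)] := by
    refine LinearIndependent.pair_iff.mpr fun s t hst => ?_
    have ht : t = 0 := by
      have h₁ := congrFun hst 1
      norm_num [h₁₃] at h₁
      exact h₁
    subst ht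
    exact ⟨by simpa [h₁₂, neg_div] using congrFun hst 0, rfl⟩
  refine eq_top_iff.mpr ((hind.span_eq_top_of_card_eq_finrank (by simp)).ge.trans
    (Submodule.span_mono ?_))
  simp [triangleVertices, Set.insert_subset_iff]

noncomputable def triangleFunctional (α γ : ℝ) : (Fin 2 → ℝ) →ₗ[ℝ] ℝ :=
  (2 * α / Real.sqrt 3) • LinearMap.proj 0 + ((4 * γ - 2 * α) / 3) • LinearMap.proj 1

theorem triangleFunctional_apply (α γ : ℝ) (z : Fin 2 → ℝ) :
    triangleFunctional α γ z = 2 * α / Real.sqrt 3 * z 0 + (4 * γ - 2 * α) / 3 * z 1 :=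
  rfl

theorem triangleFunctional_sub₂₁ (α γ : ℝ) :
    triangleFunctional α γ p₂ - triangleFunctional α γ p₁ = 2 * α := by
  simp only [triangleFunctional_apply, Matrix.cons_val_zero, Matrix.cons_val_one,
    Matrix.cons_val_fin_one]
  field_simp
  ring

theorem triangleFunctional_sub₃₁ (α γ : ℝ) :
    triangleFunctional α γ p₃ - triangleFunctional α γ p₁ = 2 * γ := by
  simp only [triangleFunctional_apply, Matrix.cons_val_zero, Matrix.cons_val_one,
    Matrix.cons_val_fin_one]
  field_simp
  ring

theorem triangleFunctional_sub₃₂ (α γ : ℝ) :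
    triangleFunctional α γ p₃ - triangleFunctional α γ p₂ = 2 * (γ - α) := by
  linarith [triangleFunctional_sub₂₁ α γ, triangleFunctional_sub₃₁ α γ]

theorem abs_triangleFunctional_le_one {R₁₂ R₁₃ R₂₃ α γ : ℝ} (h₁₂ : 0 < R₁₂) (h₁₃ : 0 < R₁₃)
    (h₂₃ : 0 < R₂₃) (hα : |α| ≤ R₁₂) (hγ : |γ| ≤ R₁₃) (hγα : |γ - α| ≤ R₂₃) :
    ∀ s ∈ triangleVertices R₁₂ R₁₃ R₂₃, |triangleFunctional α γ s| ≤ 1 := by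
  rintro s (rfl | rfl | rfl)
  · refine abs_apply_inv_smul_sub_le_one h₁₂ ?_
    rw [triangleFunctional_sub₂₁, abs_mul, abs_two]; linarith
  · refine abs_apply_inv_smul_sub_le_one h₁₃ ?_
    rw [triangleFunctional_sub₃₁, abs_mul, abs_two]; linarith
  · refine abs_apply_inv_smul_sub_le_one h₂₃ ?_
    rw [triangleFunctional_sub₃₂, abs_mul, abs_two]; linarith

end EquilateralTriangle

/-- Sufficiency: given positive reals satisfying the triangle-type inequalities,
there is a `0`-symmetric planar convex body realizing them as the pairwise
circumradii of the vertices of an equilateral triangle. -/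
theorem exists_body_realizing_pairs (R12 R13 R23 : ℝ)
    (h13 : 0 < R13) (h23 : 0 < R23) (h1312 : R13 ≤ R12)
    (hlow : R12 - R13 ≤ R23) (hup : R23 ≤ R12 + R13) :
    ∃ C : Set (Fin 2 → ℝ),
      IsCompact C ∧ Convex ℝ C ∧ (interior C).Nonempty ∧ C = -C ∧
      circumradius {![-(Real.sqrt 3) / 2, -(1 / 2)], ![Real.sqrt 3 / 2, -(1 / 2)]} C = R12 ∧
      circumradius {![-(Real.sqrt 3) / 2, -(1 / 2)], ![0, 1]} C = R13 ∧
      circumradius {![Real.sqrt 3 / 2, -(1 / 2)], ![0, 1]} C = R23 := by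
  have h12 : 0 < R12 := h13.trans_le h1312
  set S := triangleVertices R12 R13 R23
  have hf : ∀ s ∈ S, |triangleFunctional R12 R13 s| ≤ 1 :=
    abs_triangleFunctional_le_one h12 h13 h23 (abs_of_pos h12).le (abs_of_pos h13).le
      (abs_le.mpr ⟨by linarith, by linarith⟩)
  have hg : ∀ s ∈ S, |triangleFunctional (R13 - R23) R13 s| ≤ 1 :=
    abs_triangleFunctional_le_one h12 h13 h23 (abs_le.mpr ⟨by linarith, by linarith⟩)
      (abs_of_pos h13).le (by rw [sub_sub_cancel, abs_of_pos h23])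
  have hS : S.Finite := finite_triangleVertices R12 R13 R23
  refine ⟨convexHull ℝ (S ∪ -S), (hS.union hS.neg).isCompact_convexHull ℝ, convex_convexHull ℝ _,
    interior_convexHull_union_neg_nonempty (span_triangleVertices_eq_top h12.ne' h13.ne' R23),
    (neg_convexHull_union_neg S).symm, ?_, ?_, ?_⟩
  · exact circumradius_pair_convexHull_union_neg h12 (Or.inl rfl) _
      (triangleFunctional_sub₂₁ R12 R13) hf
  · exact circumradius_pair_convexHull_union_neg h13 (Or.inr (Or.inl rfl)) _
      (triangleFunctional_sub₃₁ R12 R13) hf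
  · exact circumradius_pair_convexHull_union_neg h23 (Or.inr (Or.inr rfl)) _
      (by rw [triangleFunctional_sub₃₂]; ring) hg
end

section
/- Let S be the equilateral triangle with vertices p₁ = (−√3/2, −1/2), p₂ = (√3/2, −1/2), p₃ = (0,1), let C ⊂ ℝ² be a 0-symmetric convex body, set R_{ij} := R({p_i,p_j},C) and R₁₂₃ := R(S,C), and assume 0 < R₁₃ ≤ R₁₂. Then max{R₁₂,R₁₃,R₂₃} ≤ R₁₂₃ ≤ 8R₁₂R₁₃R₂₃ / (√3·(2R₁₂R₁₃ + 2R₁₂R₂₃ + 2R₁₃R₂₃ − R₁₂² − R₁₃² − R₂₃²)). -/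
open Pointwise

/-! For a `0`-symmetric convex body `C`, the circumradius of a pair `{p, q}` is half the
`C`-gauge of `p - q`; the lower bound is then monotonicity of the circumradius. For the upper
bound, centre `C` at the barycentre of the vertices with weights `R₂₃(R₁₂ + R₁₃ - R₂₃)`,
`R₁₃(R₁₂ + R₂₃ - R₁₃)`, `R₁₂(R₁₃ + R₂₃ - R₁₂)`, which sum to the denominator `D`: by the
triangle inequality for the gauge every vertex lies within `4 R₁₂ R₁₃ R₂₃ / D` of it, and
`4 ≤ 8 / √3`. -/

open Set Bornology Topology

theorem Convex.mem_nhds_zero_of_neg_mem {E : Type*} [AddCommGroup E] [Module ℝ E]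
    [TopologicalSpace E] [IsTopologicalAddGroup E] [ContinuousSMul ℝ E] {C : Set E}
    (hconv : Convex ℝ C) (hsymm : ∀ x ∈ C, -x ∈ C) (hint : (interior C).Nonempty) :
    C ∈ 𝓝 (0 : E) := by
  obtain ⟨y, hy⟩ := hint
  have hy' : -y ∈ interior C := by
    have : interior C ⊆ -interior C := by
      rw [show -interior C = interior (-C) from (Homeomorph.neg E).preimage_interior C]
      exact interior_mono hsymm
    exact this hy
  rw [← mem_interior_iff_mem_nhds,
    show (0 : E) = (2⁻¹ : ℝ) • y + (2⁻¹ : ℝ) • -y by module]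
  exact hconv.interior hy hy' (by norm_num) (by norm_num) (by norm_num)

theorem mem_smul_of_gauge_lt {E : Type*} [AddCommGroup E] [Module ℝ E] {C : Set E}
    (hconv : Convex ℝ C) (habs : Absorbent ℝ C) {v : E} {r : ℝ} (h : gauge C v < r) :
    v ∈ r • C := by
  have hr : 0 < r := (gauge_nonneg v).trans_lt h
  have hv : r⁻¹ • v ∈ C := by
    refine setOfPred_gauge_lt_one_subset_self hconv habs.zero_mem habs ?_
    rw [mem_ofPred_eq, gauge_smul_of_nonneg (inv_nonneg.2 hr.le), smul_eq_mul,
      inv_mul_lt_one₀ hr]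
    exact h
  simpa [smul_smul, hr.ne'] using smul_mem_smul_set (a := r) hv

theorem Seminorm.mul_map_sub_le_of_smul_eq {E : Type*} [AddCommGroup E] [Module ℝ E]
    (s : Seminorm ℝ E) {p q r z : E} {u v w : ℝ} (hv : 0 ≤ v) (hw : 0 ≤ w)
    (hsum : 0 ≤ u + v + w) (hz : (u + v + w) • z = u • p + v • q + w • r) :
    (u + v + w) * s (p - z) ≤ v * s (p - q) + w * s (p - r) := by
  have hpz : (u + v + w) • (p - z) = v • (p - q) + w • (p - r) := by
    rw [smul_sub, hz]; module
  calc (u + v + w) * s (p - z) = s ((u + v + w) • (p - z)) := by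
        rw [map_smul_eq_mul, Real.norm_of_nonneg hsum]
    _ ≤ s (v • (p - q)) + s (w • (p - r)) := hpz ▸ map_add_le_add _ _ _
    _ = v * s (p - q) + w * s (p - r) := by
        rw [map_smul_eq_mul, map_smul_eq_mul, Real.norm_of_nonneg hv, Real.norm_of_nonneg hw]

theorem triangle_quadratic_form_pos {a b c : ℝ} (ha : 0 < a) (hb : 0 < b) (hc : 0 < c)
    (hab : a ≤ b + c) (hbc : b ≤ a + c) (hca : c ≤ a + b) :
    0 < 2 * a * b + 2 * a * c + 2 * b * c - a ^ 2 - b ^ 2 - c ^ 2 := by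
  nlinarith [mul_pos ha hb, mul_pos hb hc, mul_pos ha hc, mul_nonneg ha.le (sub_nonneg.2 hab),
    mul_nonneg hb.le (sub_nonneg.2 hbc), mul_nonneg hc.le (sub_nonneg.2 hca)]

theorem Seminorm.exists_triangle_subset_closedBall {E : Type*} [AddCommGroup E] [Module ℝ E]
    (s : Seminorm ℝ E) {p₁ p₂ p₃ : E} {a b c : ℝ} (ha : s (p₁ - p₂) = 2 * a)
    (hb : s (p₁ - p₃) = 2 * b) (hc : s (p₂ - p₃) = 2 * c) (ha0 : 0 < a) (hb0 : 0 < b)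
    (hc0 : 0 < c) :
    ∃ z, {p₁, p₂, p₃} ⊆ s.closedBall z
      (4 * a * b * c / (2 * a * b + 2 * a * c + 2 * b * c - a ^ 2 - b ^ 2 - c ^ 2)) := by
  have htri : ∀ x y w : E, s (x - y) ≤ s (x - w) + s (w - y) := fun x y w => by
    simpa only [sub_add_sub_cancel] using map_add_le_add s (x - w) (w - y)
  have hab : a ≤ b + c := by linarith [htri p₁ p₂ p₃, map_sub_rev s p₃ p₂]
  have hbc : b ≤ a + c := by linarith [htri p₁ p₃ p₂]
  have hca : c ≤ a + b := by linarith [htri p₂ p₃ p₁, map_sub_rev s p₂ p₁]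
  set D := 2 * a * b + 2 * a * c + 2 * b * c - a ^ 2 - b ^ 2 - c ^ 2
  have hD : 0 < D := triangle_quadratic_form_pos ha0 hb0 hc0 hab hbc hca
  set w₁ := c * (a + b - c)
  set w₂ := b * (a + c - b)
  set w₃ := a * (b + c - a)
  have hw₁ : 0 ≤ w₁ := mul_nonneg hc0.le (by linarith)
  have hw₂ : 0 ≤ w₂ := mul_nonneg hb0.le (by linarith)
  have hw₃ : 0 ≤ w₃ := mul_nonneg ha0.le (by linarith)
  have hsum : w₁ + w₂ + w₃ = D := by ring
  set z := D⁻¹ • (w₁ • p₁ + w₂ • p₂ + w₃ • p₃)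
  have hz : D • z = w₁ • p₁ + w₂ • p₂ + w₃ • p₃ := smul_inv_smul₀ hD.ne' _
  refine ⟨z, ?_⟩
  simp only [insert_subset_iff, singleton_subset_iff, s.mem_closedBall,
    le_div_iff₀ hD, mul_comm _ D]
  refine ⟨?_, ?_, ?_⟩
  · have := s.mul_map_sub_le_of_smul_eq hw₂ hw₃ (hsum ▸ hD.le) (hsum ▸ hz)
    rw [hsum, ha, hb] at this
    linarith
  · have := s.mul_map_sub_le_of_smul_eq hw₁ hw₃ (by linarith) (r := p₃)
      (show (w₂ + w₁ + w₃) • z = w₂ • p₂ + w₁ • p₁ + w₃ • p₃ by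
        rw [show w₂ + w₁ + w₃ = D by linarith, hz]; abel)
    rw [show w₂ + w₁ + w₃ = D by linarith, map_sub_rev s p₂ p₁, ha, hc] at this
    linarith
  · have := s.mul_map_sub_le_of_smul_eq hw₁ hw₂ (by linarith) (r := p₂)
      (show (w₃ + w₁ + w₂) • z = w₃ • p₃ + w₁ • p₁ + w₂ • p₂ by
        rw [show w₃ + w₁ + w₂ = D by linarith, hz]; abel)
    rw [show w₃ + w₁ + w₂ = D by linarith, map_sub_rev s p₃ p₁, map_sub_rev s p₃ p₂, hb,
      hc] at this
    linarith

section Circumradius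

variable {n : ℕ} {C X : Set (Fin n → ℝ)}

theorem circumradius_le_of_forall_gauge_sub_le (hconv : Convex ℝ C) (habs : Absorbent ℝ C)
    {c : Fin n → ℝ} {r : ℝ} (hr : 0 ≤ r) (h : ∀ p ∈ X, gauge C (p - c) ≤ r) :
    circumradius X C ≤ r := by
  refine le_of_forall_pos_le_add fun ε hε => csInf_le ⟨0, fun _ h => h.1⟩ ⟨by positivity, -c, ?_⟩
  rintro _ ⟨p, hp, rfl⟩
  refine mem_smul_of_gauge_lt hconv habs ?_
  change gauge C (-c + p) < r + ε
  rw [neg_add_eq_sub]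
  linarith [h p hp]

theorem le_circumradius (hC : C ∈ 𝓝 0) (hX : IsBounded X) {a : ℝ}
    (h : ∀ r, 0 ≤ r → ∀ x : Fin n → ℝ, x +ᵥ X ⊆ r • C → a ≤ r) : a ≤ circumradius X C := by
  obtain ⟨r, hr, hXr⟩ := (NormedSpace.isVonNBounded_of_isBounded ℝ hX hC).exists_pos
  refine le_csInf ⟨r, hr.le, 0, ?_⟩ fun r' ⟨hr', x, hx⟩ => h r' hr' x hx
  rw [zero_vadd]
  exact hXr r (Real.norm_of_nonneg hr.le).ge

theorem gauge_sub_div_two_le_circumradius (hconv : Convex ℝ C) (hsymm : ∀ x ∈ C, -x ∈ C)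
    (hC : C ∈ 𝓝 0) (hX : IsBounded X) {p q : Fin n → ℝ} (hp : p ∈ X) (hq : q ∈ X) :
    gauge C (p - q) / 2 ≤ circumradius X C := by
  refine le_circumradius hC hX fun r hr x hx => ?_
  have hxp : gauge C (x + p) ≤ r := gauge_le_of_mem hr (hx (vadd_mem_vadd_set hp))
  have hxq : gauge C (-(x + q)) ≤ r := by
    rw [gauge_neg hsymm]
    exact gauge_le_of_mem hr (hx (vadd_mem_vadd_set hq))
  have := gauge_add_le hconv (absorbent_nhds_zero hC) (x + p) (-(x + q))
  rw [show x + p + -(x + q) = p - q by abel] at this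
  linarith

theorem circumradius_pair (hconv : Convex ℝ C) (hsymm : ∀ x ∈ C, -x ∈ C) (hC : C ∈ 𝓝 0)
    (p q : Fin n → ℝ) : circumradius {p, q} C = gauge C (p - q) / 2 := by
  refine le_antisymm ?_ (gauge_sub_div_two_le_circumradius hconv hsymm hC
    (toFinite _).isBounded (by simp) (by simp))
  have hhalf : gauge C ((2⁻¹ : ℝ) • (p - q)) = gauge C (p - q) / 2 := by
    rw [gauge_smul_of_nonneg (by norm_num), smul_eq_mul, inv_mul_eq_div]
  refine circumradius_le_of_forall_gauge_sub_le hconv (absorbent_nhds_zero hC)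
    (c := (2⁻¹ : ℝ) • (p + q)) (div_nonneg (gauge_nonneg _) zero_le_two) ?_
  simp only [mem_insert_iff, mem_singleton_iff, forall_eq_or_imp, forall_eq]
  constructor
  · rw [show p - (2⁻¹ : ℝ) • (p + q) = (2⁻¹ : ℝ) • (p - q) by module, hhalf]
  · rw [show q - (2⁻¹ : ℝ) • (p + q) = -((2⁻¹ : ℝ) • (p - q)) by module, gauge_neg hsymm, hhalf]

theorem circumradius_pair_pos (hconv : Convex ℝ C) (hsymm : ∀ x ∈ C, -x ∈ C) (hC : C ∈ 𝓝 0)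
    (hbdd : IsBounded C) {p q : Fin n → ℝ} (hpq : p ≠ q) : 0 < circumradius {p, q} C := by
  rw [circumradius_pair hconv hsymm hC]
  exact half_pos ((gauge_pos (absorbent_nhds_zero hC)
    (NormedSpace.isVonNBounded_of_isBounded ℝ hbdd)).2 (sub_ne_zero.2 hpq))

theorem circumradius_pair_le_add (hconv : Convex ℝ C) (hsymm : ∀ x ∈ C, -x ∈ C)
    (hC : C ∈ 𝓝 0) (p q r : Fin n → ℝ) :
    circumradius {p, q} C ≤ circumradius {p, r} C + circumradius {r, q} C := by
  rw [circumradius_pair hconv hsymm hC, circumradius_pair hconv hsymm hC,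
    circumradius_pair hconv hsymm hC, ← add_div, ← sub_add_sub_cancel p r q]
  gcongr
  exact gauge_add_le hconv (absorbent_nhds_zero hC) _ _

theorem triangle_quadratic_form_circumradius_pos (hconv : Convex ℝ C)
    (hsymm : ∀ x ∈ C, -x ∈ C) (hC : C ∈ 𝓝 0) {p₁ p₂ p₃ : Fin n → ℝ} {a b c : ℝ}
    (ha : circumradius {p₁, p₂} C = a) (hb : circumradius {p₁, p₃} C = b)
    (hc : circumradius {p₂, p₃} C = c) (ha0 : 0 < a) (hb0 : 0 < b) (hc0 : 0 < c) :
    0 < 2 * a * b + 2 * a * c + 2 * b * c - a ^ 2 - b ^ 2 - c ^ 2 := by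
  have htri := circumradius_pair_le_add hconv hsymm hC
  subst ha hb hc
  refine triangle_quadratic_form_pos ha0 hb0 hc0 ?_ (htri p₁ p₃ p₂) ?_
  · simpa only [pair_comm p₃ p₂] using htri p₁ p₂ p₃
  · simpa only [pair_comm p₂ p₁] using htri p₂ p₃ p₁

theorem circumradius_convexHull_triple_le (hconv : Convex ℝ C) (hsymm : ∀ x ∈ C, -x ∈ C)
    (hC : C ∈ 𝓝 0) {p₁ p₂ p₃ : Fin n → ℝ} {a b c : ℝ}
    (ha : circumradius {p₁, p₂} C = a) (hb : circumradius {p₁, p₃} C = b)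
    (hc : circumradius {p₂, p₃} C = c) (ha0 : 0 < a) (hb0 : 0 < b) (hc0 : 0 < c) :
    circumradius (convexHull ℝ {p₁, p₂, p₃}) C ≤
      4 * a * b * c / (2 * a * b + 2 * a * c + 2 * b * c - a ^ 2 - b ^ 2 - c ^ 2) := by
  have habs := absorbent_nhds_zero (𝕜 := ℝ) hC
  let s := gaugeSeminorm ((balanced_iff_neg_mem hconv).2 hsymm) hconv habs
  have hs : ∀ p q, s (p - q) = 2 * circumradius {p, q} C := fun p q => by
    rw [circumradius_pair hconv hsymm hC]
    exact (mul_div_cancel₀ _ two_ne_zero).symm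
  obtain ⟨z, hz⟩ := s.exists_triangle_subset_closedBall (ha ▸ hs p₁ p₂) (hb ▸ hs p₁ p₃)
    (hc ▸ hs p₂ p₃) ha0 hb0 hc0
  have hhull := convexHull_min hz (s.convex_closedBall z _)
  exact circumradius_le_of_forall_gauge_sub_le hconv habs
    ((gauge_nonneg _).trans (s.mem_closedBall.1 (hz (mem_insert _ _))))
    fun p hp => s.mem_closedBall.1 (hhull hp)

end Circumradius

theorem circumradius_triangle_bounds_general (C : Set (Fin 2 → ℝ))
    (hC : IsCompact C) (hconv : Convex ℝ C) (hint : (interior C).Nonempty)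
    (hsym : C = -C)
    (p₁ p₂ p₃ : Fin 2 → ℝ)
    (hp₂ : p₂ = ![Real.sqrt 3 / 2, -(1 / 2)])
    (hp₃ : p₃ = ![0, 1])
    (R12 R13 R23 R123 : ℝ)
    (hR12 : R12 = circumradius {p₁, p₂} C) (hR13 : R13 = circumradius {p₁, p₃} C)
    (hR23 : R23 = circumradius {p₂, p₃} C)
    (hR123 : R123 = circumradius (convexHull ℝ {p₁, p₂, p₃}) C)
    (hpos : 0 < R13) (hord : R13 ≤ R12) :
    max R12 (max R13 R23) ≤ R123 ∧
    R123 ≤ 8 * R12 * R13 * R23 /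
      (Real.sqrt 3 * (2 * R12 * R13 + 2 * R12 * R23 + 2 * R13 * R23
        - R12 ^ 2 - R13 ^ 2 - R23 ^ 2)) := by
  have hsymm : ∀ x ∈ C, -x ∈ C := fun x hx => by rwa [hsym] at hx
  have hC0 := hconv.mem_nhds_zero_of_neg_mem hsymm hint
  have hR12pos : 0 < R12 := hpos.trans_le hord
  have hR23pos : 0 < R23 := hR23 ▸ circumradius_pair_pos hconv hsymm hC0 hC.isBounded
    (by rw [hp₂, hp₃]; norm_num [← List.ofFn_inj])
  have hlow : ∀ p ∈ ({p₁, p₂, p₃} : Set _), ∀ q ∈ ({p₁, p₂, p₃} : Set _),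
      circumradius {p, q} C ≤ R123 := fun p hp q hq => by
    rw [circumradius_pair hconv hsymm hC0, hR123]
    exact gauge_sub_div_two_le_circumradius hconv hsymm hC0
      (isBounded_convexHull.2 (toFinite _).isBounded)
      (subset_convexHull ℝ _ hp) (subset_convexHull ℝ _ hq)
  refine ⟨max_le (hR12 ▸ hlow _ (by simp) _ (by simp))
    (max_le (hR13 ▸ hlow _ (by simp) _ (by simp)) (hR23 ▸ hlow _ (by simp) _ (by simp))), ?_⟩
  have hD := triangle_quadratic_form_circumradius_pos hconv hsymm hC0 hR12.symm hR13.symm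
    hR23.symm hR12pos hpos hR23pos
  have hsqrt : Real.sqrt 3 ≤ 2 := by
    rw [Real.sqrt_le_left (by norm_num)]; norm_num
  calc R123 ≤ 4 * R12 * R13 * R23 / (2 * R12 * R13 + 2 * R12 * R23 + 2 * R13 * R23
        - R12 ^ 2 - R13 ^ 2 - R23 ^ 2) :=
        hR123 ▸ circumradius_convexHull_triple_le hconv hsymm hC0 hR12.symm hR13.symm
          hR23.symm hR12pos hpos hR23pos
    _ ≤ _ := by
        rw [div_le_div_iff₀ hD (by positivity)]
        nlinarith [mul_pos (mul_pos (mul_pos hR12pos hpos) hR23pos) hD]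

/-- Bounds for the circumradius of the equilateral triangle in terms of the
pairwise circumradii of its vertices, w.r.t. a `0`-symmetric planar convex body. -/
theorem circumradius_triangle_bounds (C : Set (Fin 2 → ℝ))
    (hC : IsCompact C) (hconv : Convex ℝ C) (hint : (interior C).Nonempty)
    (hsym : C = -C)
    (p₁ p₂ p₃ : Fin 2 → ℝ)
    (hp₁ : p₁ = ![-(Real.sqrt 3) / 2, -(1 / 2)]) (hp₂ : p₂ = ![Real.sqrt 3 / 2, -(1 / 2)])
    (hp₃ : p₃ = ![0, 1])
    (R12 R13 R23 R123 : ℝ)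
    (hR12 : R12 = circumradius {p₁, p₂} C) (hR13 : R13 = circumradius {p₁, p₃} C)
    (hR23 : R23 = circumradius {p₂, p₃} C)
    (hR123 : R123 = circumradius (convexHull ℝ {p₁, p₂, p₃}) C)
    (hpos : 0 < R13) (hord : R13 ≤ R12) :
    max R12 (max R13 R23) ≤ R123 ∧
    R123 ≤ 8 * R12 * R13 * R23 /
      (Real.sqrt 3 * (2 * R12 * R13 + 2 * R12 * R23 + 2 * R13 * R23
        - R12 ^ 2 - R13 ^ 2 - R23 ^ 2)) :=
  circumradius_triangle_bounds_general C hC hconv hint hsym p₁ p₂ p₃ hp₂ hp₃ R12 R13 R23 R123 hR12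
    hR13 hR23 hR123 hpos hord
end
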